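/- g-eviction security of saferAd-CP (Theorem 1): let fee : Tx → ℚ be any fee function satisfying fee(tx) ≥ 21000 · tx.price for every transaction tx. Then for any initial mempool state st₀ and any finite list of arriving (benign or adversarial) transactions ta₁, …, taₙ (each not already in the pool at its arrival), the final state stₙ obtained by iterating the saferAd-CP admission step satisfies Σ_{tx ∈ stₙ} fee(tx) ≥ 21000 · Σ_{tx ∈ st₀} tx.price; that is, the total fees of the end-state mempool are lower-bounded by the function g(st₀) = 21000 · Σ_{tx ∈ st₀} tx.price, which depends only on the initial state. -/
import Mathlib


/-- A transaction: sender, nonce (naturals) and a nonnegative rational price. -/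
structure Tx where
  sender : ℕ
  nonce : ℕ
  price : ℚ≥0
deriving DecidableEq

instance : DecidableRel ((· ≤ ·) : ℚ≥0 → ℚ≥0 → Prop) :=
  fun a b => decidable_of_iff ((a : ℚ) ≤ (b : ℚ)) (by exact_mod_cast Iff.rfl)

/-- `tx₁` is an ancestor of `tx₂`. -/
def Ancestor (tx₁ tx₂ : Tx) : Prop :=
  tx₁.sender = tx₂.sender ∧ tx₁.nonce < tx₂.nonce

instance (tx₁ tx₂ : Tx) : Decidable (Ancestor tx₁ tx₂) :=
  decidable_of_iff (tx₁.sender = tx₂.sender ∧ tx₁.nonce < tx₂.nonce) Iff.rfl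

/-- `te` is a childless transaction in the mempool state `st`. -/
def Childless (te : Tx) (st : Finset Tx) : Prop :=
  te ∈ st ∧ ∀ tx ∈ st, ¬ Ancestor te tx

/-- `pick` selects, from any nonempty mempool state, a childless transaction of
minimum price among the childless transactions of the state. -/
def ValidPick (pick : Finset Tx → Tx) : Prop :=
  ∀ st : Finset Tx, st.Nonempty →
    Childless (pick st) st ∧ ∀ tx : Tx, Childless tx st → (pick st).price ≤ tx.price

/-- The saferAd-CP admission step with capacity `m`, eviction candidate chosen by `pick`. -/
def adTx (m : ℕ) (pick : Finset Tx → Tx) (st : Finset Tx) (ta : Tx) : Finset Tx :=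
  if st.card < m then insert ta st
  else if ta.price ≤ (pick st).price then st
  else insert ta (st.erase (pick st))

/-- The state after processing the list of arriving transactions `ops` from `st₀`. -/
def run (m : ℕ) (pick : Finset Tx → Tx) (st₀ : Finset Tx) (ops : List Tx) : Finset Tx :=
  ops.foldl (adTx m pick) st₀


lemma sum_price_adTx_le (m : ℕ) (pick : Finset Tx → Tx) (hpick : ValidPick pick)
    (st : Finset Tx) (ta : Tx) (hta : ta ∉ st) :
    ∑ tx ∈ st, (tx.price : ℚ) ≤ ∑ tx ∈ adTx m pick st ta, (tx.price : ℚ) := by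
  unfold adTx
  split_ifs with h1 h2
  · rw [Finset.sum_insert hta]
    have : (0:ℚ) ≤ (ta.price : ℚ) := ta.price.coe_nonneg
    linarith
  · exact le_refl _
  · rcases Finset.eq_empty_or_nonempty st with rfl | hne
    · simp [Finset.sum_insert, ta.price.coe_nonneg]
    · obtain ⟨⟨hmem, -⟩, -⟩ := hpick st hne
      have hta' : ta ∉ st.erase (pick st) := fun h => hta (Finset.mem_of_mem_erase h)
      rw [Finset.sum_insert hta', Finset.sum_erase_eq_sub hmem]
      have hlt : ((pick st).price : ℚ) < (ta.price : ℚ) := by exact_mod_cast lt_of_not_ge h2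
      linarith

lemma sum_price_run_le (m : ℕ) (pick : Finset Tx → Tx) (hpick : ValidPick pick)
    (st₀ : Finset Tx) (ops : List Tx)
    (hfresh : ∀ (pre : List Tx) (ta : Tx) (post : List Tx),
      ops = pre ++ ta :: post → ta ∉ run m pick st₀ pre) :
    ∑ tx ∈ st₀, (tx.price : ℚ) ≤ ∑ tx ∈ run m pick st₀ ops, (tx.price : ℚ) := by
  induction ops generalizing st₀ with
  | nil => exact le_refl _
  | cons ta ops ih =>
    have hta : ta ∉ st₀ := hfresh [] ta ops rfl
    have h1 := sum_price_adTx_le m pick hpick st₀ ta hta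
    have h2 := ih (adTx m pick st₀ ta) (fun pre tb post heq => by
      have := hfresh (ta :: pre) tb post (by simp [heq])
      simpa [run] using this)
    calc ∑ tx ∈ st₀, (tx.price : ℚ) ≤ _ := h1
      _ ≤ _ := h2

/-- Theorem 1, g-eviction security of saferAd-CP: for any fee
function satisfying `fee tx ≥ 21000 · tx.price`, the total fees of the end-state
mempool are lower-bounded by `g(st₀) = 21000 · Σ_{tx ∈ st₀} tx.price`, a value
depending only on the initial state. -/
theorem run_eviction_security (m : ℕ) (pick : Finset Tx → Tx) (hpick : ValidPick pick)
    (fee : Tx → ℚ) (hfee : ∀ tx : Tx, 21000 * (tx.price : ℚ) ≤ fee tx)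
    (st₀ : Finset Tx) (ops : List Tx)
    (hfresh : ∀ (pre : List Tx) (ta : Tx) (post : List Tx),
      ops = pre ++ ta :: post → ta ∉ run m pick st₀ pre) :
    21000 * ∑ tx ∈ st₀, (tx.price : ℚ) ≤ ∑ tx ∈ run m pick st₀ ops, fee tx := by
  have h1 := sum_price_run_le m pick hpick st₀ ops hfresh
  have h2 : 21000 * ∑ tx ∈ run m pick st₀ ops, (tx.price : ℚ) ≤ ∑ tx ∈ run m pick st₀ ops, fee tx := by
    rw [Finset.mul_sum]
    exact Finset.sum_le_sum fun tx _ => hfee tx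
  calc 21000 * ∑ tx ∈ st₀, (tx.price : ℚ) ≤ 21000 * ∑ tx ∈ run m pick st₀ ops, (tx.price : ℚ) := by
        linarith
    _ ≤ _ := h2
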